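/- Let T = ℕ₀ be the tree rooted at 0 with n ∼ m iff |n−m| = 1, and φ(0) = 0, φ(n) = 2n for n ≥ 1. Then the operator norm of C_φ on Lip_0(T) equals 2 = λ_φ, while 1 + |φ(0)| = 1; hence the upper estimate ‖C_φ‖ ≤ max{1+|φ(o)|, λ_φ} is attained and is sharp. -/

import Mathlib

/-!
Composition with `φ` can only increase the norm by the factor `max (1 + φ 0) λ_φ`, because a
function with successive differences at most `L` is `L`-Lipschitz for the path metric of the tree
`ℕ₀`. For `φ n = 2 n` this factor is `2`, and the ramp `min n 2`, of norm `1`, shows that it is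
attained: `φ` sends the edge `{0, 1}` to the path `0, 1, 2`, along which the ramp rises by `2`.
-/

/-- `Lip₀(ℕ₀)`: bounded successive differences tending to `0`. -/
def MemLip0N (f : ℕ → ℂ) : Prop :=
  (∃ C : ℝ, ∀ n : ℕ, ‖f (n + 1) - f n‖ ≤ C) ∧
  Filter.Tendsto (fun n : ℕ => ‖f (n + 1) - f n‖) Filter.atTop (nhds 0)

/-- the Lipschitz norm on `ℕ₀`. -/
noncomputable def normLipN (f : ℕ → ℂ) : ℝ :=
  max ‖f 0‖ (sSup {r : ℝ | ∃ n : ℕ, r = ‖f (n + 1) - f n‖})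

open Filter

section normLipN

variable {f : ℕ → ℂ}

lemma norm_zero_le_normLipN (f : ℕ → ℂ) : ‖f 0‖ ≤ normLipN f :=
  le_max_left _ _

lemma normLipN_nonneg (f : ℕ → ℂ) : 0 ≤ normLipN f :=
  (norm_nonneg _).trans (norm_zero_le_normLipN f)

lemma norm_sub_le_normLipN (hf : ∃ C : ℝ, ∀ n : ℕ, ‖f (n + 1) - f n‖ ≤ C) (n : ℕ) :
    ‖f (n + 1) - f n‖ ≤ normLipN f := by
  obtain ⟨C, hC⟩ := hf
  have hbdd : BddAbove {r : ℝ | ∃ n : ℕ, r = ‖f (n + 1) - f n‖} :=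
    ⟨C, by rintro _ ⟨k, rfl⟩; exact hC k⟩
  exact (le_csSup hbdd ⟨n, rfl⟩).trans (le_max_right _ _)

lemma normLipN_le {C : ℝ} (h0 : ‖f 0‖ ≤ C) (hd : ∀ n : ℕ, ‖f (n + 1) - f n‖ ≤ C) :
    normLipN f ≤ C :=
  max_le h0 (csSup_le ⟨_, 0, rfl⟩ (by rintro _ ⟨n, rfl⟩; exact hd n))

lemma norm_sub_le_dist_mul_normLipN (hf : ∃ C : ℝ, ∀ n : ℕ, ‖f (n + 1) - f n‖ ≤ C) (m k : ℕ) :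
    ‖f m - f k‖ ≤ dist m k * normLipN f := by
  wlog hkm : k ≤ m generalizing m k
  · rw [← norm_neg, neg_sub, dist_comm]
    exact this k m (le_of_not_ge hkm)
  have htelescope : dist (f k) (f m) ≤ ∑ _i ∈ Finset.Ico k m, normLipN f :=
    dist_le_Ico_sum_of_dist_le hkm fun _ _ => by
      rw [dist_comm, dist_eq_norm]
      exact norm_sub_le_normLipN hf _
  rw [dist_comm, dist_eq_norm, Finset.sum_const, Nat.card_Ico, nsmul_eq_mul] at htelescope
  rwa [Nat.dist_eq, abs_of_nonneg (sub_nonneg.2 (Nat.cast_le.2 hkm)), ← Nat.cast_sub hkm]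

lemma norm_comp_succ_sub_le (hf : ∃ C : ℝ, ∀ n : ℕ, ‖f (n + 1) - f n‖ ≤ C) {φ : ℕ → ℕ} {c : ℝ}
    (hφ : ∀ n : ℕ, dist (φ (n + 1)) (φ n) ≤ c) (n : ℕ) :
    ‖f (φ (n + 1)) - f (φ n)‖ ≤ c * normLipN f :=
  (norm_sub_le_dist_mul_normLipN hf _ _).trans
    (mul_le_mul_of_nonneg_right (hφ n) (normLipN_nonneg f))

theorem normLipN_comp_le (hf : ∃ C : ℝ, ∀ n : ℕ, ‖f (n + 1) - f n‖ ≤ C) {φ : ℕ → ℕ} {c : ℝ}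
    (hφ : ∀ n : ℕ, dist (φ (n + 1)) (φ n) ≤ c) :
    normLipN (f ∘ φ) ≤ max (1 + (φ 0 : ℝ)) c * normLipN f := by
  refine normLipN_le ?_ fun n => ?_
  · calc ‖f (φ 0)‖ = ‖f 0 + (f (φ 0) - f 0)‖ := by rw [add_sub_cancel]
      _ ≤ normLipN f + dist (φ 0) 0 * normLipN f :=
        (norm_add_le _ _).trans
          (add_le_add (norm_zero_le_normLipN f) (norm_sub_le_dist_mul_normLipN hf _ _))
      _ = (1 + (φ 0 : ℝ)) * normLipN f := by
        rw [Nat.dist_eq, Nat.cast_zero, sub_zero, Nat.abs_cast]; ring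
      _ ≤ max (1 + (φ 0 : ℝ)) c * normLipN f :=
        mul_le_mul_of_nonneg_right (le_max_left _ _) (normLipN_nonneg f)
  · calc ‖f (φ (n + 1)) - f (φ n)‖ ≤ c * normLipN f := norm_comp_succ_sub_le hf hφ n
      _ ≤ max (1 + (φ 0 : ℝ)) c * normLipN f :=
        mul_le_mul_of_nonneg_right (le_max_right _ _) (normLipN_nonneg f)

end normLipN

def ramp (k n : ℕ) : ℂ := (min n k : ℕ)

lemma ramp_succ_sub_of_le {k n : ℕ} (h : k ≤ n) : ramp k (n + 1) - ramp k n = 0 := by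
  simp [ramp, h, h.trans n.le_succ]

lemma norm_ramp_succ_sub_le (k n : ℕ) : ‖ramp k (n + 1) - ramp k n‖ ≤ 1 := by
  rcases lt_or_ge n k with h | h
  · simp [ramp, h.le, Nat.succ_le_of_lt h]
  · simp [ramp_succ_sub_of_le h]

lemma memLip0N_ramp (k : ℕ) : MemLip0N (ramp k) :=
  ⟨⟨1, norm_ramp_succ_sub_le k⟩,
    tendsto_const_nhds.congr' <| (eventually_ge_atTop k).mono fun n h => by
      simp [ramp_succ_sub_of_le h]⟩

lemma normLipN_ramp_le_one (k : ℕ) : normLipN (ramp k) ≤ 1 :=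
  normLipN_le (by simp [ramp]) (norm_ramp_succ_sub_le k)

/-- For the tree `ℕ₀` rooted at `0` and `φ(0) = 0`, `φ(n) = 2n` for `n ≥ 1`, the operator
norm of `C_φ` on `Lip₀` equals `2 = λ_φ`, while `1 + |φ(0)| = 1`; so the upper estimate
`‖C_φ‖ ≤ max {1 + |φ(0)|, λ_φ}` is attained and sharp. -/
theorem opNorm_example_sharp (φ : ℕ → ℕ) (hφ : φ 0 = 0) (hφ' : ∀ n : ℕ, 1 ≤ n → φ n = 2 * n) :
    sInf {C : ℝ | 0 ≤ C ∧ ∀ f : ℕ → ℂ, MemLip0N f → normLipN (f ∘ φ) ≤ C * normLipN f} = 2 ∧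
    sSup {r : ℝ | ∃ n : ℕ, 1 ≤ n ∧ r = |(φ n : ℝ) - (φ (n - 1) : ℝ)|} = 2 ∧
    1 + (φ 0 : ℝ) = 1 := by
  obtain rfl : φ = (2 * ·) := funext fun n => by
    rcases n with _ | n
    · exact hφ
    · exact hφ' _ n.succ_pos
  have hstep (n : ℕ) : dist (2 * (n + 1)) (2 * n) = (2 : ℝ) := by
    rw [Nat.dist_eq]; push_cast; norm_num [mul_add]
  refine ⟨IsLeast.csInf_eq ⟨⟨zero_le_two, fun f hf => ?_⟩, ?_⟩,
    IsGreatest.csSup_eq ⟨⟨1, le_rfl, ?_⟩, ?_⟩, by simp⟩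
  · simpa using normLipN_comp_le hf.1 fun n => (hstep n).le
  · rintro C ⟨hC0, hC⟩
    have hbdd := norm_comp_succ_sub_le (memLip0N_ramp 2).1 fun n => (hstep n).le
    calc (2 : ℝ) = ‖(ramp 2 ∘ (2 * ·)) (0 + 1) - (ramp 2 ∘ (2 * ·)) 0‖ := by norm_num [ramp]
      _ ≤ normLipN (ramp 2 ∘ (2 * ·)) := norm_sub_le_normLipN ⟨_, hbdd⟩ 0
      _ ≤ C * normLipN (ramp 2) := hC _ (memLip0N_ramp 2)
      _ ≤ C := mul_le_of_le_one_right hC0 (normLipN_ramp_le_one 2)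
  · norm_num
  · rintro _ ⟨_ | n, hn, rfl⟩
    · exact absurd hn (by norm_num)
    · rw [Nat.add_sub_cancel, ← Nat.dist_eq]
      exact (hstep n).le
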